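/- Let Φ : [s₀, ∞) → ℝ be differentiable with Φ(s₀) = x₀ and suppose (d/ds)Φ(s)² ≥ 3Φ(s)² - 2C|Φ(s)|^{4/3} for all s ≥ s₀, where C > 0 and |x₀|^{2/3} > (2/3)C. Then |Φ(s)| ≥ (|x₀|^{2/3} - (2/3)C)^{3/2} e^{(3/2)(s - s₀)} for all s ≥ s₀. -/

import Mathlib

/-!
Write `b = 2C/3` and `u = |Φ|^{2/3}`, so that `Φ² = u³`. Where `u > 0` the hypothesis
`(u³)' ≥ 3u³ - 3b u²` divides by `3u²` to `u' ≥ u - b`, so `v = u - b` satisfies `v' ≥ v`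
wherever `v > 0`. As `v(s₀) > 0`, a first-exit argument keeps `v` positive, `v e^{-s}` is
nondecreasing, and `u(s) ≥ v(s) ≥ v(s₀) e^{s-s₀}`; raising to the power `3/2` gives the bound.
-/

open Real Set

lemma mul_exp_le_of_le_deriv {v : ℝ → ℝ} {a T : ℝ} (haT : a ≤ T)
    (hv : ContinuousOn v (Icc a T)) (hderiv : ∀ t ∈ Ioo a T, ∃ d, HasDerivAt v d t ∧ v t ≤ d) :
    v a * exp (T - a) ≤ v T := by
  set w : ℝ → ℝ := fun t => v t * exp (a - t)
  have hw : ∀ t ∈ Ioo a T, ∃ d, HasDerivAt w d t ∧ 0 ≤ d := by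
    intro t ht
    obtain ⟨d, hd, hvd⟩ := hderiv t ht
    have hexp : HasDerivAt (fun r => exp (a - r)) (exp (a - t) * -1) t :=
      ((hasDerivAt_id t).const_sub a).exp
    refine ⟨_, hd.mul hexp, ?_⟩
    nlinarith [exp_pos (a - t)]
  have hmono : MonotoneOn w (Icc a T) := by
    refine monotoneOn_of_deriv_nonneg (convex_Icc a T)
      (hv.mul (by fun_prop)) (fun t ht => ?_) (fun t ht => ?_) <;> rw [interior_Icc] at ht
    · obtain ⟨d, hd, -⟩ := hw t ht
      exact hd.differentiableAt.differentiableWithinAt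
    · obtain ⟨d, hd, hd0⟩ := hw t ht
      rwa [hd.deriv]
  have := hmono (left_mem_Icc.2 haT) (right_mem_Icc.2 haT) haT
  simp only [w, sub_self, exp_zero, mul_one] at this
  calc v a * exp (T - a) ≤ v T * exp (a - T) * exp (T - a) := by gcongr
    _ = v T := by rw [mul_assoc, ← exp_add]; simp

lemma mul_exp_le_of_le_deriv_of_pos {v : ℝ → ℝ} {a : ℝ} (hv : ContinuousOn v (Ici a))
    (ha : 0 < v a) (hderiv : ∀ t, a < t → 0 < v t → ∃ d, HasDerivAt v d t ∧ v t ≤ d)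
    {t : ℝ} (ht : a ≤ t) : v a * exp (t - a) ≤ v t := by
  -- first exit: at `T = inf {t ≥ a | v t ≤ 0}` the bound on `[a, T]` would give `v T > 0`
  have hpos : ∀ t, a ≤ t → 0 < v t := by
    by_contra! h
    obtain ⟨t₁, ht₁, hvt₁⟩ := h
    set S := Icc a t₁ ∩ v ⁻¹' Iic 0
    have hS : IsClosed S :=
      (hv.mono Icc_subset_Ici_self).preimage_isClosed_of_isClosed isClosed_Icc isClosed_Iic
    have hSbdd : BddBelow S := bddBelow_Icc.mono inter_subset_left
    obtain ⟨⟨haT, -⟩, hvT⟩ := hS.csInf_mem ⟨t₁, ⟨ht₁, le_rfl⟩, hvt₁⟩ hSbdd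
    set T := sInf S
    have hTt₁ : T ≤ t₁ := csInf_le hSbdd ⟨⟨ht₁, le_rfl⟩, hvt₁⟩
    have hbefore : ∀ r ∈ Ioo a T, 0 < v r := by
      intro r hr
      by_contra! hr'
      exact hr.2.not_ge (csInf_le hSbdd ⟨⟨hr.1.le, hr.2.le.trans hTt₁⟩, hr'⟩)
    have := mul_exp_le_of_le_deriv haT (hv.mono Icc_subset_Ici_self)
      (fun r hr => hderiv r hr.1 (hbefore r hr))
    nlinarith [exp_pos (T - a), show v T ≤ 0 from hvT]
  exact mul_exp_le_of_le_deriv ht (hv.mono Icc_subset_Ici_self)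
    fun r hr => hderiv r hr.1 (hpos r hr.1.le)

lemma exists_hasDerivAt_rpow_one_third_sub {f : ℝ → ℝ} {f' c t : ℝ} (hf : HasDerivAt f f' t)
    (hpos : 0 < f t) (h : 3 * f t - 3 * c * f t ^ (2/3 : ℝ) ≤ f') :
    ∃ d, HasDerivAt (fun s => f s ^ (1/3 : ℝ) - c) d t ∧ f t ^ (1/3 : ℝ) - c ≤ d := by
  refine ⟨_, (hf.rpow_const (Or.inl hpos.ne')).sub_const c, ?_⟩
  calc f t ^ (1/3 : ℝ) - c
      = (3 * f t - 3 * c * f t ^ (2/3 : ℝ)) * (1/3) * f t ^ ((1/3 : ℝ) - 1) := by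
        have h1 : f t * f t ^ ((1/3 : ℝ) - 1) = f t ^ (1/3 : ℝ) := by
          rw [← rpow_one_add' hpos.le (by norm_num)]
          norm_num
        have h2 : f t ^ (2/3 : ℝ) * f t ^ ((1/3 : ℝ) - 1) = 1 := by
          rw [← rpow_add hpos]
          norm_num
        linear_combination -h1 + c * h2
    _ ≤ f' * (1/3) * f t ^ ((1/3 : ℝ) - 1) := by gcongr

lemma sq_rpow_eq_abs_rpow (x p : ℝ) : (x ^ 2) ^ p = |x| ^ (2 * p) := by
  rw [← sq_abs, ← rpow_natCast_mul (abs_nonneg x)]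
  norm_num

theorem stmt11 (s₀ x₀ C : ℝ) (Φ : ℝ → ℝ) (hC : 0 < C)
    (hΦ0 : Φ s₀ = x₀)
    (hx₀ : (2/3) * C < |x₀| ^ ((2:ℝ)/3))
    (hdiff : Differentiable ℝ Φ)
    (hineq : ∀ s : ℝ, s₀ ≤ s →
      3 * Φ s ^ 2 - 2 * C * |Φ s| ^ ((4:ℝ)/3) ≤ deriv (fun t => Φ t ^ 2) s) :
    ∀ s : ℝ, s₀ ≤ s →
      (|x₀| ^ ((2:ℝ)/3) - (2/3) * C) ^ ((3:ℝ)/2) * Real.exp ((3/2) * (s - s₀)) ≤ |Φ s| := by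
  intro s hs
  have hF : Differentiable ℝ (fun t => Φ t ^ 2) := hdiff.pow 2
  set v : ℝ → ℝ := fun t => (Φ t ^ 2) ^ (1/3 : ℝ) - 2/3 * C
  have hv₀ : v s₀ = |x₀| ^ ((2:ℝ)/3) - 2/3 * C := by
    simp only [v, hΦ0, sq_rpow_eq_abs_rpow]
    norm_num
  have hderiv : ∀ t, s₀ < t → 0 < v t → ∃ d, HasDerivAt v d t ∧ v t ≤ d := by
    intro t ht hvt
    have hpos : 0 < Φ t ^ 2 := (sq_nonneg _).lt_of_ne' fun h0 => by
      simp only [v, h0, zero_rpow (by norm_num : (1/3 : ℝ) ≠ 0)] at hvt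
      linarith
    refine exists_hasDerivAt_rpow_one_third_sub (hF t).hasDerivAt hpos ?_
    have := hineq t ht.le
    rw [sq_rpow_eq_abs_rpow]
    norm_num at this ⊢
    linarith
  have hv : Continuous v :=
    (hF.continuous.rpow_const fun _ => Or.inr (by norm_num)).sub continuous_const
  have hgrowth := mul_exp_le_of_le_deriv_of_pos hv.continuousOn (hv₀ ▸ sub_pos.2 hx₀) hderiv hs
  have hΦs : |Φ s| = ((Φ s ^ 2) ^ (1/3 : ℝ)) ^ ((3:ℝ)/2) := by
    rw [sq_rpow_eq_abs_rpow, ← rpow_mul (abs_nonneg _)]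
    norm_num
  rw [hv₀] at hgrowth
  rw [hΦs, mul_comm (3/2 : ℝ), exp_mul, ← mul_rpow (sub_pos.2 hx₀).le (exp_pos _).le]
  gcongr
  linarith [show v s = (Φ s ^ 2) ^ (1/3 : ℝ) - 2/3 * C from rfl]
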